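/- Let T₁₁, T₂₁, T₂₂ be matrices over a field of sizes ν₁×μ₁, ν₂×μ₁, ν₂×μ₂. Then there exists a matrix X of size ν₁×μ₂ such that rank[[T₁₁, X],[T₂₁, T₂₂]] = rank[T₁₁; T₂₁] + rank[T₂₁ T₂₂] − rank T₂₁. -/

import Mathlib

/-!
Take a generalized inverse `G` of `T₂₁` (`T₂₁ G T₂₁ = T₂₁`), put `T' = T₂₂ - T₂₁ G T₂₂` and
`X = T₁₁ G T₂₂`. Subtracting the first block column times `G T₂₂` preserves rank and turns
`[T₂₁ T₂₂]` into `[T₂₁ T']` and `[[T₁₁, X], [T₂₁, T₂₂]]` into `[[T₁₁, 0], [T₂₁, T']]`.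
Since `T₂₁ G` fixes the columns of `T₂₁` and kills those of `T'`, the column spaces of the two
block columns meet trivially in both matrices, so the ranks add:
`rank [T₂₁ T₂₂] = rank T₂₁ + rank T'` and `rank [[T₁₁, X], [T₂₁, T₂₂]] = rank [T₁₁; T₂₁] + rank T'`.
-/

open Matrix Module

theorem LinearMap.exists_comp_comp_eq_self {K V W : Type*} [DivisionRing K] [AddCommGroup V]
    [Module K V] [AddCommGroup W] [Module K W] (f : V →ₗ[K] W) :
    ∃ g : W →ₗ[K] V, f ∘ₗ g ∘ₗ f = f := by
  obtain ⟨s, hs⟩ := f.rangeRestrict.exists_rightInverse_of_surjective f.range_rangeRestrict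
  obtain ⟨g, hg⟩ := LinearMap.exists_extend s
  refine ⟨g, LinearMap.ext fun v => ?_⟩
  have hgf : g (f v) = s (f.rangeRestrict v) := LinearMap.congr_fun hg (f.rangeRestrict v)
  simpa [hgf] using congr_arg Subtype.val (LinearMap.congr_fun hs (f.rangeRestrict v))

namespace Matrix

variable {K : Type*} [Field K] {m m₁ m₂ n n₁ n₂ : Type*}
  [Fintype n] [Fintype n₁] [Fintype n₂]

theorem exists_mul_mul_eq_self [Fintype m] (A : Matrix m n K) :
    ∃ G : Matrix n m K, A * G * A = A := by
  classical
  obtain ⟨g, hg⟩ := A.mulVecLin.exists_comp_comp_eq_self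
  refine ⟨LinearMap.toMatrix' g, toLin'.injective ?_⟩
  rw [toLin'_mul, toLin'_mul, toLin'_toMatrix']
  exact hg

theorem range_mulVecLin_fromCols (A : Matrix m n₁ K) (B : Matrix m n₂ K) :
    LinearMap.range (fromCols A B).mulVecLin =
      LinearMap.range A.mulVecLin ⊔ LinearMap.range B.mulVecLin := by
  have hcol : (fromCols A B).col = Sum.elim A.col B.col := by
    funext j
    cases j <;> rfl
  rw [range_mulVecLin, range_mulVecLin, range_mulVecLin, hcol, Set.Sum.elim_range,
    Submodule.span_union]

theorem rank_fromCols_of_disjoint {A : Matrix m n₁ K} {B : Matrix m n₂ K}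
    (h : Disjoint (LinearMap.range A.mulVecLin) (LinearMap.range B.mulVecLin)) :
    (fromCols A B).rank = A.rank + B.rank := by
  have := Submodule.finrank_sup_add_finrank_inf_eq
    (LinearMap.range A.mulVecLin) (LinearMap.range B.mulVecLin)
  rw [h.eq_bot, finrank_bot, add_zero] at this
  rw [rank, range_mulVecLin_fromCols, this, rank, rank]

theorem rank_fromRows_zero_left [Fintype m₁] [Fintype m₂] (B : Matrix m₂ n K) :
    (fromRows (0 : Matrix m₁ n K) B).rank = B.rank := by
  rw [← rank_transpose, transpose_fromRows, transpose_zero, rank, range_mulVecLin_fromCols,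
    mulVecLin_zero, LinearMap.range_zero, bot_sup_eq, ← rank, rank_transpose]

theorem disjoint_range_fromRows_zero_left {A₁ : Matrix m₁ n₁ K} {A₂ : Matrix m₂ n₁ K}
    {B : Matrix m₂ n₂ K}
    (h : Disjoint (LinearMap.range A₂.mulVecLin) (LinearMap.range B.mulVecLin)) :
    Disjoint (LinearMap.range (fromRows A₁ A₂).mulVecLin)
      (LinearMap.range (fromRows (0 : Matrix m₁ n₂ K) B).mulVecLin) := by
  rw [Submodule.disjoint_def] at h ⊢
  rintro _ ⟨a, rfl⟩ ⟨b, hb⟩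
  simp only [mulVecLin_apply, fromRows_mulVec, zero_mulVec, Sum.elim_eq_iff] at hb ⊢
  rw [← hb.1, h (A₂ *ᵥ a) ⟨a, rfl⟩ ⟨b, hb.2⟩, Sum.elim_zero_zero]

theorem rank_fromCols_sub_mul (A : Matrix m n₁ K) (B : Matrix m n₂ K) (Y : Matrix n₁ n₂ K) :
    (fromCols A (B - A * Y)).rank = (fromCols A B).rank := by
  classical
  have hU : IsUnit (fromBlocks 1 Y 0 1 : Matrix (n₁ ⊕ n₂) (n₁ ⊕ n₂) K).det := by
    simp
  rw [← rank_mul_eq_left_of_isUnit_det _ _ hU, fromCols_mul_fromBlocks]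
  simp

theorem disjoint_range_sub_mul_mul [Fintype m] {A : Matrix m n₁ K} {G : Matrix n₁ m K}
    (hG : A * G * A = A) (B : Matrix m n₂ K) :
    Disjoint (LinearMap.range A.mulVecLin) (LinearMap.range (B - A * (G * B)).mulVecLin) := by
  have hkill : A * G * (B - A * (G * B)) = 0 := by
    simp only [Matrix.mul_sub, ← Matrix.mul_assoc, hG, sub_self]
  rw [Submodule.disjoint_def]
  rintro x ⟨a, rfl⟩ ⟨c, hc⟩
  simp only [mulVecLin_apply] at hc ⊢
  calc A *ᵥ a = (A * G * A) *ᵥ a := by rw [hG]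
    _ = (A * G * (B - A * (G * B))) *ᵥ c := by rw [← mulVec_mulVec, ← hc, mulVec_mulVec]
    _ = 0 := by rw [hkill, zero_mulVec]

end Matrix

/-- Attainability half of the 2×2 minimal rank completion formula. -/
theorem rank_completion_attained {F : Type*} [Field F] {ν₁ ν₂ μ₁ μ₂ : ℕ}
    (T₁₁ : Matrix (Fin ν₁) (Fin μ₁) F) (T₂₁ : Matrix (Fin ν₂) (Fin μ₁) F)
    (T₂₂ : Matrix (Fin ν₂) (Fin μ₂) F) :
    ∃ X : Matrix (Fin ν₁) (Fin μ₂) F,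
      (Matrix.fromBlocks T₁₁ X T₂₁ T₂₂).rank =
        (Matrix.fromRows T₁₁ T₂₁).rank + (Matrix.fromCols T₂₁ T₂₂).rank
          - T₂₁.rank := by
  obtain ⟨G, hG⟩ := exists_mul_mul_eq_self T₂₁
  have hdisj := disjoint_range_sub_mul_mul hG T₂₂
  have hcols : (fromCols T₂₁ T₂₂).rank = T₂₁.rank + (T₂₂ - T₂₁ * (G * T₂₂)).rank := by
    rw [← rank_fromCols_sub_mul T₂₁ T₂₂ (G * T₂₂), rank_fromCols_of_disjoint hdisj]
  have hcleared : fromRows (T₁₁ * (G * T₂₂)) T₂₂ - fromRows T₁₁ T₂₁ * (G * T₂₂) =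
      fromRows 0 (T₂₂ - T₂₁ * (G * T₂₂)) := by
    rw [fromRows_mul]
    ext (i | i) j <;> simp
  refine ⟨T₁₁ * (G * T₂₂), ?_⟩
  rw [← fromCols_fromRows_eq_fromBlocks, ← rank_fromCols_sub_mul _ _ (G * T₂₂), hcleared,
    rank_fromCols_of_disjoint (disjoint_range_fromRows_zero_left hdisj),
    rank_fromRows_zero_left, hcols]
  omega
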